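/- Let λ ∈ (0, 1) and d₁, d₂ ∈ (0, 1/2]. Then g_λ(d₁) < g_λ(−d₁) and g_λ(d₂) < g_λ(−d₂); moreover, setting A := g_λ(d₁) − g_λ(−d₁), B := g_λ(d₂) − g_λ(−d₂), and π₁ := B/(A + B), we have π₁ ∈ (0, 1), the equalization identity π₁·g_λ(d₁) + (1 − π₁)·g_λ(−d₂) = π₁·g_λ(−d₁) + (1 − π₁)·g_λ(d₂), and this common value is at most ((2p)^λ + (2p̄)^λ)/2. -/

import Mathlib

/-- `g_λ(d) = p^λ (1/2 + (p̄-p)d)^{1-λ} + p̄^λ (1/2 - (p̄-p)d)^{1-λ}` with `p̄ = 1 - p`;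
powers are real powers. -/
noncomputable def gFun (p lam d : ℝ) : ℝ :=
  p ^ lam * (1 / 2 + ((1 - p) - p) * d) ^ (1 - lam) +
    (1 - p) ^ lam * (1 / 2 - ((1 - p) - p) * d) ^ (1 - lam)

/-!
Write `a = 1/2 + (p̄ - p)d` and `b = 1/2 - (p̄ - p)d`, so that `a + b = 1`. Then
`g(-d) - g(d) = (p̄^λ - p^λ)(a^{1-λ} - b^{1-λ})`, which is positive for `d > 0` since both
factors are, and `g(d) + g(-d) = (p^λ + p̄^λ)(a^{1-λ} + b^{1-λ}) ≤ 2^λ (p^λ + p̄^λ)` by concavity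
of `x ↦ x^{1-λ}`. The weight `π₁ = B/(A+B)` balances the two gaps, and at the balance point the
common value is half of `π₁ (g(d₁) + g(-d₁)) + (1 - π₁)(g(d₂) + g(-d₂))`, hence at most half
the bound above.
-/

section Equalization

variable {K : Type*} [Field K] {x₁ y₁ x₂ y₂ M : K}

def equalizingWeight (x₁ y₁ x₂ y₂ : K) : K := (x₂ - y₂) / ((x₁ - y₁) + (x₂ - y₂))

lemma one_sub_equalizingWeight (h : (x₁ - y₁) + (x₂ - y₂) ≠ 0) :
    1 - equalizingWeight x₁ y₁ x₂ y₂ = (x₁ - y₁) / ((x₁ - y₁) + (x₂ - y₂)) := by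
  rw [equalizingWeight, eq_div_iff h, sub_mul, div_mul_cancel₀ _ h]
  ring

lemma equalizingWeight_mix_eq (h : (x₁ - y₁) + (x₂ - y₂) ≠ 0) :
    equalizingWeight x₁ y₁ x₂ y₂ * x₁ + (1 - equalizingWeight x₁ y₁ x₂ y₂) * y₂ =
      equalizingWeight x₁ y₁ x₂ y₂ * y₁ + (1 - equalizingWeight x₁ y₁ x₂ y₂) * x₂ := by
  have balance : equalizingWeight x₁ y₁ x₂ y₂ * (x₁ - y₁) =
      (1 - equalizingWeight x₁ y₁ x₂ y₂) * (x₂ - y₂) := by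
    rw [one_sub_equalizingWeight h, equalizingWeight]
    ring
  linear_combination balance

variable [LinearOrder K] [IsStrictOrderedRing K]

lemma equalizingWeight_pos (h₁ : x₁ < y₁) (h₂ : x₂ < y₂) :
    0 < equalizingWeight x₁ y₁ x₂ y₂ :=
  div_pos_of_neg_of_neg (by linarith) (by linarith)

lemma equalizingWeight_lt_one (h₁ : x₁ < y₁) (h₂ : x₂ < y₂) :
    equalizingWeight x₁ y₁ x₂ y₂ < 1 := by
  have h : 0 < 1 - equalizingWeight x₁ y₁ x₂ y₂ := by
    rw [one_sub_equalizingWeight (by linarith)]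
    exact div_pos_of_neg_of_neg (by linarith) (by linarith)
  linarith

lemma equalizingWeight_mix_le (h₁ : x₁ < y₁) (h₂ : x₂ < y₂)
    (hM₁ : x₁ + y₁ ≤ M) (hM₂ : x₂ + y₂ ≤ M) :
    equalizingWeight x₁ y₁ x₂ y₂ * x₁ + (1 - equalizingWeight x₁ y₁ x₂ y₂) * y₂ ≤ M / 2 := by
  set w := equalizingWeight x₁ y₁ x₂ y₂
  have hw0 : 0 ≤ w := (equalizingWeight_pos h₁ h₂).le
  have hw1 : 0 ≤ 1 - w := sub_nonneg.2 (equalizingWeight_lt_one h₁ h₂).le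
  have heq := equalizingWeight_mix_eq (x₁ := x₁) (y₁ := y₁) (x₂ := x₂) (y₂ := y₂) (by linarith)
  nlinarith [mul_le_mul_of_nonneg_left hM₁ hw0, mul_le_mul_of_nonneg_left hM₂ hw1]

end Equalization

lemma Real.rpow_add_rpow_le_two_mul_rpow_half {t x y : ℝ} (ht0 : 0 ≤ t) (ht1 : t ≤ 1)
    (hx : 0 ≤ x) (hy : 0 ≤ y) : x ^ t + y ^ t ≤ 2 * ((x + y) / 2) ^ t := by
  have h := (Real.concaveOn_rpow ht0 ht1).2 (Set.mem_Ici.2 hx) (Set.mem_Ici.2 hy)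
    (by norm_num : (0 : ℝ) ≤ 1 / 2) (by norm_num : (0 : ℝ) ≤ 1 / 2) (by norm_num)
  simp only [smul_eq_mul] at h
  rw [show 1 / 2 * x + 1 / 2 * y = (x + y) / 2 by ring] at h
  linarith

section gFun

variable {p lam d : ℝ}

lemma gFun_neg_sub_gFun (p lam d : ℝ) :
    gFun p lam (-d) - gFun p lam d =
      ((1 - p) ^ lam - p ^ lam) *
        ((1 / 2 + (1 - p - p) * d) ^ (1 - lam) - (1 / 2 - (1 - p - p) * d) ^ (1 - lam)) := by
  simp only [gFun, mul_neg, sub_neg_eq_add, ← sub_eq_add_neg]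
  ring

lemma gFun_add_gFun_neg (p lam d : ℝ) :
    gFun p lam d + gFun p lam (-d) =
      (p ^ lam + (1 - p) ^ lam) *
        ((1 / 2 + (1 - p - p) * d) ^ (1 - lam) + (1 / 2 - (1 - p - p) * d) ^ (1 - lam)) := by
  simp only [gFun, mul_neg, sub_neg_eq_add, ← sub_eq_add_neg]
  ring

lemma gFun_lt_gFun_neg (hp0 : 0 ≤ p) (hp : p < 1 / 2) (hlam0 : 0 < lam) (hlam1 : lam < 1)
    (hd0 : 0 < d) (hd : d ≤ 1 / 2) : gFun p lam d < gFun p lam (-d) := by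
  have hb : 0 ≤ 1 / 2 - (1 - p - p) * d := by nlinarith
  have hba : 1 / 2 - (1 - p - p) * d < 1 / 2 + (1 - p - p) * d := by nlinarith
  rw [← sub_pos, gFun_neg_sub_gFun]
  exact mul_pos (sub_pos.2 (Real.rpow_lt_rpow hp0 (by linarith) hlam0))
    (sub_pos.2 (Real.rpow_lt_rpow hb hba (by linarith)))

lemma gFun_add_gFun_neg_le (hp0 : 0 ≤ p) (hp1 : p ≤ 1) (hlam0 : 0 ≤ lam) (hlam1 : lam ≤ 1)
    (hd0 : -(1 / 2) ≤ d) (hd : d ≤ 1 / 2) :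
    gFun p lam d + gFun p lam (-d) ≤ (2 * p) ^ lam + (2 * (1 - p)) ^ lam := by
  have ha : 0 ≤ 1 / 2 + (1 - p - p) * d := by nlinarith
  have hb : 0 ≤ 1 / 2 - (1 - p - p) * d := by nlinarith
  have hconc := Real.rpow_add_rpow_le_two_mul_rpow_half (t := 1 - lam) (by linarith) (by linarith) ha hb
  have hhalf : 2 * ((1 / 2 + (1 - p - p) * d + (1 / 2 - (1 - p - p) * d)) / 2) ^ (1 - lam)
      = (2 : ℝ) ^ lam := by
    rw [show 1 / 2 + (1 - p - p) * d + (1 / 2 - (1 - p - p) * d) = 1 by ring, one_div,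
      Real.inv_rpow zero_le_two, Real.rpow_sub zero_lt_two, Real.rpow_one]
    field_simp
  rw [gFun_add_gFun_neg, Real.mul_rpow zero_le_two hp0, Real.mul_rpow zero_le_two (by linarith),
    ← mul_add, mul_comm ((2 : ℝ) ^ lam), ← hhalf]
  exact mul_le_mul_of_nonneg_left hconc (by positivity)

end gFun

theorem stmt_13 (p : ℝ) (hp0 : 0 < p) (hp : p < 1 / 2)
    (lam : ℝ) (hlam0 : 0 < lam) (hlam1 : lam < 1)
    (d₁ d₂ : ℝ) (hd₁0 : 0 < d₁) (hd₁ : d₁ ≤ 1 / 2) (hd₂0 : 0 < d₂) (hd₂ : d₂ ≤ 1 / 2) :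
    gFun p lam d₁ < gFun p lam (-d₁) ∧
    gFun p lam d₂ < gFun p lam (-d₂) ∧
    (let A := gFun p lam d₁ - gFun p lam (-d₁)
     let B := gFun p lam d₂ - gFun p lam (-d₂)
     let π₁ := B / (A + B)
     0 < π₁ ∧ π₁ < 1 ∧
     π₁ * gFun p lam d₁ + (1 - π₁) * gFun p lam (-d₂) =
       π₁ * gFun p lam (-d₁) + (1 - π₁) * gFun p lam d₂ ∧
     π₁ * gFun p lam d₁ + (1 - π₁) * gFun p lam (-d₂) ≤
       ((2 * p) ^ lam + (2 * (1 - p)) ^ lam) / 2) := by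
  have h₁ := gFun_lt_gFun_neg hp0.le hp hlam0 hlam1 hd₁0 hd₁
  have h₂ := gFun_lt_gFun_neg hp0.le hp hlam0 hlam1 hd₂0 hd₂
  have hp1 : p ≤ 1 := by linarith
  refine ⟨h₁, h₂, equalizingWeight_pos h₁ h₂, equalizingWeight_lt_one h₁ h₂,
    equalizingWeight_mix_eq (by linarith), equalizingWeight_mix_le h₁ h₂ ?_ ?_⟩
  · exact gFun_add_gFun_neg_le hp0.le hp1 hlam0.le hlam1.le (by linarith) hd₁
  · exact gFun_add_gFun_neg_le hp0.le hp1 hlam0.le hlam1.le (by linarith) hd₂
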